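/- Let 𝔤 be a finite-dimensional Lie algebra over ℝ and 𝔥 ⊆ 𝔤 a Lie subalgebra. Then the following are equivalent: (i) there exists a ∈ (𝔤/𝔥)* such that ind 𝔥^a + codim_{(𝔤/𝔥)*} O_a = ind 𝔤; (ii) ind(𝔥 ⋉ (𝔤/𝔥)) = ind 𝔤. -/

import Mathlib

open Module

/-! Infrastructure: the index of a Lie algebra, the semidirect product `𝔥 ⋉ M` of a Lie
algebra and a module (the module being regarded as an abelian Lie algebra), the `𝔥`-module
`𝔤/𝔥` for a Lie subalgebra `𝔥 ⊆ 𝔤`, and the coadjoint action of `𝔥` on `(𝔤/𝔥)*`. -/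

section Index

variable (K : Type*) [Field K]

/-- The stabilizer `𝔩^f = {x ∈ 𝔩 : f(⁅x,y⁆) = 0 for all y}` of a linear functional `f` on a
Lie algebra `𝔩`, as a subspace of `𝔩`. -/
def lieCoadStabilizer (L : Type*) [LieRing L] [LieAlgebra K L] (f : Module.Dual K L) :
    Submodule K L where
  carrier := {x | ∀ y, f ⁅x, y⁆ = 0}
  add_mem' := by
    intro a b ha hb y
    rw [add_lie, map_add, ha y, hb y, add_zero]
  zero_mem' := by
    intro y
    rw [zero_lie, map_zero]
  smul_mem' := by
    intro c x hx y
    rw [smul_lie, map_smul, hx y, smul_zero]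

/-- The index of a Lie algebra `𝔩`: the minimal dimension of the stabilizer `𝔩^f` over all
linear functionals `f ∈ 𝔩*`. -/
noncomputable def lieIndex (L : Type*) [LieRing L] [LieAlgebra K L] : ℕ :=
  sInf {n | ∃ f : Module.Dual K L, n = Module.finrank K (lieCoadStabilizer K L f)}

end Index

section SemidirectProduct

variable (K : Type*) [CommRing K]
variable (L : Type*) [LieRing L] [LieAlgebra K L]
variable (M : Type*) [AddCommGroup M] [Module K M] [LieRingModule L M] [LieModule K L M]

/-- The semidirect product `L ⋉ M` of a Lie algebra `L` and an `L`-module `M` regarded as an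
abelian Lie algebra, with bracket `⁅(x,u),(y,w)⁆ = (⁅x,y⁆, ⁅x,w⁆ − ⁅y,u⁆)`. -/
def LieSemidirect (L M : Type*) := L × M

namespace LieSemidirect

instance : AddCommGroup (LieSemidirect L M) := inferInstanceAs (AddCommGroup (L × M))
instance : Module K (LieSemidirect L M) := inferInstanceAs (Module K (L × M))

instance : LieRing (LieSemidirect L M) :=
  { (inferInstance : AddCommGroup (LieSemidirect L M)) with
    bracket := fun p q => (⁅p.1, q.1⁆, ⁅p.1, q.2⁆ - ⁅q.1, p.2⁆)
    add_lie := fun p q r => by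
      refine Prod.ext (add_lie _ _ _) ?_
      show ⁅p.1 + q.1, r.2⁆ - ⁅r.1, p.2 + q.2⁆ =
        (⁅p.1, r.2⁆ - ⁅r.1, p.2⁆) + (⁅q.1, r.2⁆ - ⁅r.1, q.2⁆)
      rw [add_lie, lie_add]; abel
    lie_add := fun p q r => by
      refine Prod.ext (lie_add _ _ _) ?_
      show ⁅p.1, q.2 + r.2⁆ - ⁅q.1 + r.1, p.2⁆ =
        (⁅p.1, q.2⁆ - ⁅q.1, p.2⁆) + (⁅p.1, r.2⁆ - ⁅r.1, p.2⁆)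
      rw [lie_add, add_lie]; abel
    lie_self := fun p => by
      refine Prod.ext (lie_self _) ?_
      show ⁅p.1, p.2⁆ - ⁅p.1, p.2⁆ = (0 : M)
      abel
    leibniz_lie := fun p q r => by
      refine Prod.ext (leibniz_lie _ _ _) ?_
      show ⁅p.1, ⁅q.1, r.2⁆ - ⁅r.1, q.2⁆⁆ - ⁅⁅q.1, r.1⁆, p.2⁆ =
        (⁅⁅p.1, q.1⁆, r.2⁆ - ⁅r.1, ⁅p.1, q.2⁆ - ⁅q.1, p.2⁆⁆) +
        (⁅q.1, ⁅p.1, r.2⁆ - ⁅r.1, p.2⁆⁆ - ⁅⁅p.1, r.1⁆, q.2⁆)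
      simp only [lie_sub, sub_lie, lie_lie]
      abel }

instance : LieAlgebra K (LieSemidirect L M) where
  lie_smul t p q := by
    refine Prod.ext (lie_smul _ _ _) ?_
    show ⁅p.1, (t • q).2⁆ - ⁅(t • q).1, p.2⁆ = t • (⁅p.1, q.2⁆ - ⁅q.1, p.2⁆)
    show ⁅p.1, t • q.2⁆ - ⁅t • q.1, p.2⁆ = _
    rw [lie_smul, smul_lie, smul_sub]

end LieSemidirect

end SemidirectProduct

section QuotientModule

variable (K : Type*) [Field K]
variable (L : Type*) [LieRing L] [LieAlgebra K L]
variable (H : LieSubalgebra K L)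

/-- A Lie subalgebra `𝔥 ⊆ 𝔤`, regarded as a Lie submodule of `𝔤` over `𝔥`. -/
def LieSubalgebra.asLieSubmodule : LieSubmodule K H L :=
  { H.toSubmodule with
    lie_mem := fun {x} {_} hm => H.lie_mem x.2 hm }

/-- The quotient `𝔤/𝔥` as an `𝔥`-module, with `x·(v+𝔥) = ⁅x,v⁆+𝔥`. -/
abbrev LieSubalgebra.quotientModule := L ⧸ H.asLieSubmodule K L

variable (a : Module.Dual K (LieSubalgebra.quotientModule K L H))

/-- The coadjoint action map `x ↦ x·a`, `(x·a)(w) = −a(⁅x,w⁆)`, of `𝔥` on `(𝔤/𝔥)*`;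
its range is the tangent space to the coadjoint orbit `O_a`. -/
noncomputable def lieCoadMap :
    H →ₗ[K] Module.Dual K (LieSubalgebra.quotientModule K L H) where
  toFun x := -(a ∘ₗ LieModule.toEnd K H (LieSubalgebra.quotientModule K L H) x)
  map_add' x y := by
    ext w
    simp
    abel
  map_smul' c x := by
    ext w
    simp

lemma lieCoadMap_eq_zero_iff (x : H) :
    lieCoadMap K L H a x = 0 ↔ ∀ w, a ⁅x, w⁆ = 0 := by
  constructor
  · intro h w
    have := LinearMap.congr_fun h w
    simpa [lieCoadMap] using this
  · intro h
    ext w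
    simpa [lieCoadMap] using h w

/-- The stabilizer `𝔥^a = {x ∈ 𝔥 : x·a = 0}` of `a ∈ (𝔤/𝔥)*` under the coadjoint action,
as a Lie subalgebra of `𝔥`. -/
noncomputable def lieCoadIsotropy : LieSubalgebra K H :=
  { LinearMap.ker (lieCoadMap K L H a) with
    lie_mem' := by
      intro x y hx hy
      have hx' : lieCoadMap K L H a x = 0 := hx
      have hy' : lieCoadMap K L H a y = 0 := hy
      rw [lieCoadMap_eq_zero_iff] at hx' hy'
      show ⁅x, y⁆ ∈ LinearMap.ker (lieCoadMap K L H a)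
      rw [LinearMap.mem_ker, lieCoadMap_eq_zero_iff]
      intro w
      rw [lie_lie, map_sub, hx' ⁅y, w⁆, hy' ⁅x, w⁆, sub_zero] }

end QuotientModule

/-! Write a functional on `𝔥 ⋉ 𝔤/𝔥` as `f = (φ, a)`. Projecting its stabilizer to `𝔥` gives a
map onto the stabilizer of `φ|𝔥^a` in `𝔥^a` (a functional on `𝔥` vanishing on `𝔥^a` is of the form
`y ↦ a⁅y, u⁆`), whose kernel `{u : a⁅𝔥, u⁆ = 0}` has dimension `codim O_a`. This is Raïs' formula
`dim (𝔥 ⋉ 𝔤/𝔥)^f = dim (𝔥^a)^{φ|𝔥^a} + codim O_a`, whence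
`ind (𝔥 ⋉ 𝔤/𝔥) = min_a (ind 𝔥^a + codim O_a)`. On the other hand `𝔥 ⋉ 𝔤/𝔥` is a contraction of
`𝔤`, and the rank of the form `(x, y) ↦ f⁅x, y⁆` can only drop in the limit, so
`ind 𝔤 ≤ ind (𝔥 ⋉ 𝔤/𝔥)`. Both implications follow. -/

open LinearMap (ker range)
open LieSubalgebra (quotientModule)

section LinearAlgebra

variable {K E F : Type*} [Field K] [AddCommGroup E] [Module K E] [AddCommGroup F] [Module K F]

theorem LinearMap.finrank_ker_add_le_of_det_ne_zero [FiniteDimensional K E]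
    (B : E →ₗ[K] F →ₗ[K] K) {r : ℕ} (e : Fin r → E) (v : Fin r → F)
    (h : (Matrix.of fun i j => B (e i) (v j)).det ≠ 0) :
    finrank K (ker B) + r ≤ finrank K E := by
  have hind : LinearIndependent K (fun i => B (e i)) :=
    .of_comp (LinearMap.pi fun j => Module.Dual.eval K F (v j))
      (Matrix.linearIndependent_rows_of_det_ne_zero h)
  have hr : r ≤ finrank K (range B) :=
    calc r = finrank K (Submodule.span K (Set.range fun i => B (e i))) := by
          rw [finrank_span_eq_card hind, Fintype.card_fin]
      _ ≤ finrank K (range B) := Submodule.finrank_mono <|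
          Submodule.span_le.2 <| Set.range_subset_iff.2 fun i => ⟨e i, rfl⟩
  have := B.finrank_range_add_finrank_ker
  omega

theorem LinearMap.exists_det_ne_zero_finrank_ker_add_eq [FiniteDimensional K E]
    [FiniteDimensional K F] (B : E →ₗ[K] F →ₗ[K] K) :
    ∃ (r : ℕ) (e : Fin r → E) (v : Fin r → F),
      (Matrix.of fun i j => B (e i) (v j)).det ≠ 0 ∧ finrank K (ker B) + r = finrank K E := by
  obtain ⟨U, hU⟩ := Submodule.exists_isCompl (ker B)
  let b := Module.finBasis K U
  have hsurj : Function.Surjective (B.domRestrict U).flip :=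
    flip_surjective_iff₁.2 (injective_domRestrict_iff.2 hU.disjoint.symm)
  choose v hv using fun j => hsurj (b.dualBasis j)
  refine ⟨finrank K U, fun i => b i, v, ?_, ?_⟩
  · have hM : (Matrix.of fun i j => B (b i) (v j)) = 1 := by
      ext i j
      have := LinearMap.congr_fun (hv j) (b i)
      rw [flip_apply, domRestrict_apply, Module.Basis.dualBasis_apply_self] at this
      rw [Matrix.of_apply, this, Matrix.one_apply]
    rw [hM, Matrix.det_one]
    exact one_ne_zero
  · rw [add_comm]
    exact Submodule.finrank_add_eq_of_isCompl hU.symm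

theorem Submodule.finrank_map_add_finrank_inf_ker {K M N : Type*} [Field K] [AddCommGroup M]
    [Module K M] [AddCommGroup N] [Module K N] (f : M →ₗ[K] N) (p : Submodule K M)
    [FiniteDimensional K p] :
    finrank K (p.map f) + finrank K (p ⊓ ker f : Submodule K M) = finrank K p := by
  rw [← LinearMap.range_domRestrict, ← map_comap_subtype, finrank_map_subtype_eq,
    ← LinearMap.ker_domRestrict]
  exact (f.domRestrict p).finrank_range_add_finrank_ker

theorem LinearMap.finrank_range_flip {K V₁ V₂ : Type*} [Field K] [AddCommGroup V₁] [Module K V₁]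
    [AddCommGroup V₂] [Module K V₂] [FiniteDimensional K V₁] [FiniteDimensional K V₂]
    (B : V₁ →ₗ[K] V₂ →ₗ[K] K) :
    finrank K (range B.flip) = finrank K (range B) := by
  have h₁ : finrank K (ker B) + finrank K (range B.flip) = finrank K V₁ := by
    rw [← dualAnnihilator_ker_eq_range_flip]
    exact Subspace.finrank_add_finrank_dualAnnihilator_eq _
  have h₂ := B.finrank_range_add_finrank_ker
  omega

end LinearAlgebra

open Polynomial in
theorem Matrix.exists_ne_zero_det_add_smul_add_sq_smul_ne_zero {K n : Type*} [Field K] [Infinite K]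
    [Fintype n] [DecidableEq n] (A B D : Matrix n n K) (hA : A.det ≠ 0) :
    ∃ t : K, t ≠ 0 ∧ (A + t • B + t ^ 2 • D).det ≠ 0 := by
  let P : Matrix n n K[X] := A.map C + (X : K[X]) • B.map C + (X : K[X]) ^ 2 • D.map C
  have heval (t : K) : P.det.eval t = (A + t • B + t ^ 2 • D).det := by
    rw [← coe_evalRingHom, RingHom.map_det]
    congr 1
    ext i j
    simp [P]
    ring
  have hP : P.det ≠ 0 := fun h0 => hA (by simpa [h0] using (heval 0).symm)
  -- the factor `X` rules out `t = 0`
  obtain ⟨t, ht⟩ : ∃ t, (X * P.det).eval t ≠ 0 := by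
    by_contra! h
    exact mul_ne_zero X_ne_zero hP (zero_of_eval_zero _ h)
  rw [eval_mul, eval_X, heval] at ht
  exact ⟨t, left_ne_zero_of_mul ht, right_ne_zero_of_mul ht⟩

/-- Lower semicontinuity of the rank: `B` is the `t → 0` limit of the forms `B' t` pulled back
along `T t`, so some `B' t` has rank at least that of `B`. -/
theorem LinearMap.exists_finrank_ker_add_le_of_deformation {K E F : Type*} [Field K] [Infinite K]
    [AddCommGroup E] [Module K E] [AddCommGroup F] [Module K F] [FiniteDimensional K E]
    [FiniteDimensional K F] (B : E →ₗ[K] E →ₗ[K] K) (B' : K → F →ₗ[K] F →ₗ[K] K)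
    (T : K → E → F) (Q R : E → E → K)
    (h : ∀ t ≠ 0, ∀ x y, B' t (T t x) (T t y) = B x y + t * Q x y + t ^ 2 * R x y) :
    ∃ t, finrank K (ker (B' t)) + finrank K E ≤ finrank K (ker B) + finrank K F := by
  obtain ⟨r, e, v, hdet, hrank⟩ := B.exists_det_ne_zero_finrank_ker_add_eq
  obtain ⟨t, ht, hdet'⟩ := Matrix.exists_ne_zero_det_add_smul_add_sq_smul_ne_zero _
    (Matrix.of fun i j => Q (e i) (v j)) (Matrix.of fun i j => R (e i) (v j)) hdet
  have hM : (Matrix.of fun i j => B (e i) (v j)) + t • (Matrix.of fun i j => Q (e i) (v j)) +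
      t ^ 2 • (Matrix.of fun i j => R (e i) (v j)) =
        Matrix.of fun i j => B' t (T t (e i)) (T t (v j)) := by
    ext i j
    simp [h t ht]
  have := (B' t).finrank_ker_add_le_of_det_ne_zero _ _ (hM ▸ hdet')
  exact ⟨t, by omega⟩

section KirillovForm

variable {K L : Type*} [Field K] [LieRing L] [LieAlgebra K L]

def kirillovForm (f : Module.Dual K L) : L →ₗ[K] L →ₗ[K] K :=
  (LieAlgebra.ad K L : L →ₗ[K] Module.End K L).compr₂ f

@[simp]
lemma kirillovForm_apply (f : Module.Dual K L) (x y : L) : kirillovForm f x y = f ⁅x, y⁆ := rfl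

lemma mem_lieCoadStabilizer {f : Module.Dual K L} {x : L} :
    x ∈ lieCoadStabilizer K L f ↔ ∀ y, f ⁅x, y⁆ = 0 := Iff.rfl

lemma ker_kirillovForm (f : Module.Dual K L) : ker (kirillovForm f) = lieCoadStabilizer K L f := by
  ext x
  simp [LinearMap.ext_iff, mem_lieCoadStabilizer]

lemma lieIndex_le (f : Module.Dual K L) : lieIndex K L ≤ finrank K (lieCoadStabilizer K L f) :=
  Nat.sInf_le ⟨f, rfl⟩

lemma exists_finrank_lieCoadStabilizer_eq_lieIndex :
    ∃ f : Module.Dual K L, finrank K (lieCoadStabilizer K L f) = lieIndex K L :=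
  (Nat.sInf_mem ⟨_, 0, rfl⟩ : lieIndex K L ∈ _).imp fun _ => Eq.symm

end KirillovForm

namespace LieSemidirect

variable (K L M : Type*) [CommRing K] [LieRing L] [LieAlgebra K L] [AddCommGroup M] [Module K M]

def dualEquiv : (Module.Dual K L × Module.Dual K M) ≃ₗ[K] Module.Dual K (LieSemidirect L M) :=
  Module.dualProdDualEquivDual K L M

def fst : LieSemidirect L M →ₗ[K] L := LinearMap.fst K L M

def inr : M →ₗ[K] LieSemidirect L M := LinearMap.inr K L M

variable {K L M}

@[simp]
lemma fst_apply (p : LieSemidirect L M) : fst K L M p = p.1 := rfl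

@[simp]
lemma inr_apply (u : M) : inr K L M u = ((0 : L), u) := rfl

lemma inr_injective : Function.Injective (inr K L M) := LinearMap.inr_injective

@[simp]
lemma dualEquiv_apply (φ : Module.Dual K L) (a : Module.Dual K M) (p : LieSemidirect L M) :
    dualEquiv K L M (φ, a) p = φ p.1 + a p.2 := rfl

instance {K : Type*} [Field K] [LieAlgebra K L] [Module K M] [FiniteDimensional K L]
    [FiniteDimensional K M] : FiniteDimensional K (LieSemidirect L M) :=
  inferInstanceAs (FiniteDimensional K (L × M))

lemma finrank_eq {K : Type*} [Field K] [LieAlgebra K L] [Module K M] [FiniteDimensional K L]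
    [FiniteDimensional K M] :
    finrank K (LieSemidirect L M) = finrank K L + finrank K M :=
  Module.finrank_prod

variable [LieRingModule L M]

@[simp]
lemma bracket_fst (p q : LieSemidirect L M) : ⁅p, q⁆.1 = ⁅p.1, q.1⁆ := rfl

@[simp]
lemma bracket_snd (p q : LieSemidirect L M) : ⁅p, q⁆.2 = ⁅p.1, q.2⁆ - ⁅q.1, p.2⁆ := rfl

end LieSemidirect

section RaisFormula

variable {K L : Type*} [Field K] [LieRing L] [LieAlgebra K L] {H : LieSubalgebra K L}
  {a : Module.Dual K (quotientModule K L H)}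

@[simp]
lemma lieCoadMap_apply (x : H) (w : quotientModule K L H) :
    lieCoadMap K L H a x w = -a ⁅x, w⁆ := by
  simp [lieCoadMap]

lemma mem_lieCoadIsotropy {x : H} :
    x ∈ lieCoadIsotropy K L H a ↔ ∀ w, a ⁅x, w⁆ = 0 :=
  lieCoadMap_eq_zero_iff K L H a x

lemma mem_lieCoadStabilizer_dualEquiv_iff (φ : Module.Dual K H)
    (p : LieSemidirect H (quotientModule K L H)) :
    p ∈ lieCoadStabilizer K _ (LieSemidirect.dualEquiv K H _ (φ, a)) ↔
      p.1 ∈ lieCoadIsotropy K L H a ∧ ∀ y : H, φ ⁅p.1, y⁆ = a ⁅y, p.2⁆ := by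
  simp only [mem_lieCoadStabilizer, mem_lieCoadIsotropy, LieSemidirect.dualEquiv_apply,
    LieSemidirect.bracket_fst, LieSemidirect.bracket_snd, map_sub]
  refine ⟨fun h => ⟨fun w => ?_, fun y => ?_⟩, fun ⟨h₁, h₂⟩ q => by rw [h₁, h₂]; ring⟩
  · simpa using h (0, w)
  · have := h (y, 0)
    simp only [lie_zero, map_zero, zero_sub] at this
    linear_combination this

lemma inf_ker_fst_lieCoadStabilizer_dualEquiv (φ : Module.Dual K H) :
    lieCoadStabilizer K _ (LieSemidirect.dualEquiv K H _ (φ, a)) ⊓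
        ker (LieSemidirect.fst K H (quotientModule K L H)) =
      (ker (lieCoadMap K L H a).flip).map (LieSemidirect.inr K H (quotientModule K L H)) := by
  ext p
  simp only [Submodule.mem_inf, mem_lieCoadStabilizer_dualEquiv_iff, LinearMap.mem_ker,
    LieSemidirect.fst_apply, Submodule.mem_map, LieSemidirect.inr_apply]
  constructor
  · rintro ⟨⟨-, h⟩, h0⟩
    refine ⟨p.2, ?_, Prod.ext h0.symm rfl⟩
    ext y
    simp [← h y, h0]
  · rintro ⟨w, hw, rfl⟩
    refine ⟨⟨mem_lieCoadIsotropy.2 fun _ => by simp, fun y => ?_⟩, rfl⟩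
    simpa [eq_comm] using LinearMap.congr_fun hw y

variable [FiniteDimensional K L]

lemma map_fst_lieCoadStabilizer_dualEquiv (φ : Module.Dual K H) :
    (lieCoadStabilizer K _ (LieSemidirect.dualEquiv K H _ (φ, a))).map
        (LieSemidirect.fst K H (quotientModule K L H)) =
      (lieCoadStabilizer K (lieCoadIsotropy K L H a)
        (φ ∘ₗ (lieCoadIsotropy K L H a).toSubmodule.subtype)).map
          (lieCoadIsotropy K L H a).toSubmodule.subtype := by
  ext x
  simp only [Submodule.mem_map, LieSemidirect.fst_apply, Submodule.subtype_apply]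
  constructor
  · rintro ⟨p, hp, rfl⟩
    obtain ⟨hx, hφ⟩ := (mem_lieCoadStabilizer_dualEquiv_iff φ p).1 hp
    refine ⟨⟨p.1, hx⟩, fun y => ?_, rfl⟩
    exact (hφ y).trans (mem_lieCoadIsotropy.1 y.2 p.2)
  · rintro ⟨z, hz, rfl⟩
    have hξ : kirillovForm φ z ∈ (ker (lieCoadMap K L H a)).dualAnnihilator :=
      (Submodule.mem_dualAnnihilator _).2 fun y hy => hz ⟨y, hy⟩
    rw [LinearMap.dualAnnihilator_ker_eq_range_flip] at hξ
    obtain ⟨u, hu⟩ := hξ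
    refine ⟨(z, -u), (mem_lieCoadStabilizer_dualEquiv_iff φ _).2 ⟨z.2, fun y => ?_⟩, rfl⟩
    simpa using (LinearMap.congr_fun hu y).symm

theorem finrank_lieCoadStabilizer_dualEquiv_add_finrank_range (φ : Module.Dual K H) :
    finrank K (lieCoadStabilizer K _ (LieSemidirect.dualEquiv K H _ (φ, a))) +
        finrank K (range (lieCoadMap K L H a)) =
      finrank K (lieCoadStabilizer K (lieCoadIsotropy K L H a)
          (φ ∘ₗ (lieCoadIsotropy K L H a).toSubmodule.subtype)) +
        finrank K (quotientModule K L H) := by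
  have h₁ := Submodule.finrank_map_add_finrank_inf_ker (LieSemidirect.fst K H _)
    (lieCoadStabilizer K _ (LieSemidirect.dualEquiv K H _ (φ, a)))
  rw [map_fst_lieCoadStabilizer_dualEquiv, inf_ker_fst_lieCoadStabilizer_dualEquiv] at h₁
  have h₂ : finrank K ((lieCoadStabilizer K (lieCoadIsotropy K L H a)
      (φ ∘ₗ (lieCoadIsotropy K L H a).toSubmodule.subtype)).map
        (lieCoadIsotropy K L H a).toSubmodule.subtype) =
      finrank K (lieCoadStabilizer K (lieCoadIsotropy K L H a)
        (φ ∘ₗ (lieCoadIsotropy K L H a).toSubmodule.subtype)) :=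
    Submodule.finrank_map_subtype_eq _ _
  have h₃ := (Submodule.equivMapOfInjective (LieSemidirect.inr K H _)
    LieSemidirect.inr_injective (ker (lieCoadMap K L H a).flip)).finrank_eq
  have h₄ : finrank K (range (lieCoadMap K L H a).flip) +
      finrank K (ker (lieCoadMap K L H a).flip) = finrank K (quotientModule K L H) :=
    LinearMap.finrank_range_add_finrank_ker _
  have h₅ : finrank K (range (lieCoadMap K L H a).flip) =
      finrank K (range (lieCoadMap K L H a)) :=
    (lieCoadMap K L H a).finrank_range_flip
  omega

end RaisFormula

section Contraction

variable {K L : Type*} [Field K] [LieRing L] [LieAlgebra K L] {H : LieSubalgebra K L}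

/-- `𝔥 ⋉ 𝔤/𝔥` is a contraction of `𝔤`: with `ψ` extending `φ` and `s` a section of `π : 𝔤 → 𝔤/𝔥`,
pull `ψ + t⁻¹ • (a ∘ π)` back along `(x, u) ↦ x + t • s u`; the factor `t⁻¹` cancels the `t` in the
`𝔤/𝔥`-component, and at order `0` in `t` one recovers `(φ, a)` on `𝔥 ⋉ 𝔤/𝔥`. -/
theorem exists_kirillovForm_contraction (φ : Module.Dual K H)
    (a : Module.Dual K (quotientModule K L H)) :
    ∃ (F : K → Module.Dual K L) (T : K → LieSemidirect H (quotientModule K L H) → L)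
      (Q R : LieSemidirect H (quotientModule K L H) → LieSemidirect H (quotientModule K L H) → K),
      ∀ t ≠ 0, ∀ p q, kirillovForm (F t) (T t p) (T t q) =
        kirillovForm (LieSemidirect.dualEquiv K H _ (φ, a)) p q + t * Q p q + t ^ 2 * R p q := by
  let π := LieSubmodule.Quotient.mk' (H.asLieSubmodule K L)
  obtain ⟨s, hs⟩ := (π : L →ₗ[K] quotientModule K L H).exists_rightInverse_of_surjective
    (LinearMap.range_eq_top.2 (LieSubmodule.Quotient.surjective_mk' _))
  have hπs (u) : π (s u) = u := LinearMap.congr_fun hs u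
  obtain ⟨ψ, hψ⟩ := LinearMap.exists_extend (p := H.toSubmodule) φ
  have hψφ (x : H) : ψ x = φ x := LinearMap.congr_fun hψ x
  refine ⟨fun t => ψ + t⁻¹ • a ∘ₗ (π : L →ₗ[K] quotientModule K L H), fun t p => p.1 + t • s p.2,
    fun p q => ψ ⁅(p.1 : L), s q.2⁆ + ψ ⁅s p.2, (q.1 : L)⁆ + a (π ⁅s p.2, s q.2⁆),
    fun p q => ψ ⁅s p.2, s q.2⁆, fun t ht p q => ?_⟩
  have h₁ : π ⁅(p.1 : L), (q.1 : L)⁆ = 0 :=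
    (LieSubmodule.Quotient.mk_eq_zero _).2 (H.lie_mem p.1.2 q.1.2)
  have hπ (x : H) (u) : π ⁅(x : L), s u⁆ = ⁅x, u⁆ := (π.map_lie x (s u)).trans (by rw [hπs])
  have h₂ : π ⁅s p.2, (q.1 : L)⁆ = -⁅q.1, p.2⁆ := by rw [← lie_skew, map_neg, hπ]
  have h₃ : ψ ⁅(p.1 : L), (q.1 : L)⁆ = φ ⁅p.1, q.1⁆ := hψφ ⁅p.1, q.1⁆
  simp only [kirillovForm_apply, map_add, map_smul, map_sub, map_neg, map_zero, smul_eq_mul,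
    LinearMap.add_apply, LinearMap.smul_apply, LinearMap.comp_apply, LieModuleHom.coe_toLinearMap,
    LieSemidirect.dualEquiv_apply, LieSemidirect.bracket_fst, LieSemidirect.bracket_snd,
    h₁, h₂, h₃, hπ]
  field_simp
  ring

end Contraction

section Index

variable {K L : Type*} [Field K] [LieRing L] [LieAlgebra K L] [FiniteDimensional K L]
  {H : LieSubalgebra K L}

theorem lieIndex_semidirect_le (a : Module.Dual K (quotientModule K L H)) :
    lieIndex K (LieSemidirect H (quotientModule K L H)) ≤
      lieIndex K (lieCoadIsotropy K L H a) +
        (finrank K (Module.Dual K (quotientModule K L H)) -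
          finrank K (range (lieCoadMap K L H a))) := by
  obtain ⟨g, hg⟩ := exists_finrank_lieCoadStabilizer_eq_lieIndex (K := K)
    (L := lieCoadIsotropy K L H a)
  obtain ⟨φ, rfl⟩ := LinearMap.exists_extend (p := (lieCoadIsotropy K L H a).toSubmodule) g
  have h₁ := finrank_lieCoadStabilizer_dualEquiv_add_finrank_range φ (a := a)
  have h₂ := lieIndex_le (LieSemidirect.dualEquiv K H _ (φ, a))
  have h₃ := Submodule.finrank_le (range (lieCoadMap K L H a))
  rw [Subspace.dual_finrank_eq] at h₃ ⊢
  omega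

theorem exists_lieIndex_add_codim_eq_lieIndex_semidirect :
    ∃ a : Module.Dual K (quotientModule K L H),
      lieIndex K (lieCoadIsotropy K L H a) +
        (finrank K (Module.Dual K (quotientModule K L H)) -
          finrank K (range (lieCoadMap K L H a))) =
      lieIndex K (LieSemidirect H (quotientModule K L H)) := by
  obtain ⟨f, hf⟩ := exists_finrank_lieCoadStabilizer_eq_lieIndex (K := K)
    (L := LieSemidirect H (quotientModule K L H))
  obtain ⟨⟨φ, a⟩, rfl⟩ := (LieSemidirect.dualEquiv K H _).surjective f
  refine ⟨a, le_antisymm ?_ (lieIndex_semidirect_le a)⟩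
  have h₁ := finrank_lieCoadStabilizer_dualEquiv_add_finrank_range φ (a := a)
  have h₂ := lieIndex_le (K := K) (L := lieCoadIsotropy K L H a)
    (φ ∘ₗ (lieCoadIsotropy K L H a).toSubmodule.subtype)
  have h₃ := Submodule.finrank_le (range (lieCoadMap K L H a))
  rw [Subspace.dual_finrank_eq] at h₃ ⊢
  omega

theorem lieIndex_le_lieIndex_semidirect [Infinite K] :
    lieIndex K L ≤ lieIndex K (LieSemidirect H (quotientModule K L H)) := by
  obtain ⟨f, hf⟩ := exists_finrank_lieCoadStabilizer_eq_lieIndex (K := K)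
    (L := LieSemidirect H (quotientModule K L H))
  obtain ⟨⟨φ, a⟩, rfl⟩ := (LieSemidirect.dualEquiv K H _).surjective f
  obtain ⟨F, T, Q, R, hdeform⟩ := exists_kirillovForm_contraction φ a
  obtain ⟨t, ht⟩ := LinearMap.exists_finrank_ker_add_le_of_deformation _ _ _ _ _ hdeform
  rw [ker_kirillovForm, ker_kirillovForm] at ht
  have hdim : finrank K (LieSemidirect H (quotientModule K L H)) = finrank K L := by
    rw [LieSemidirect.finrank_eq, add_comm]
    exact Submodule.finrank_quotient_add_finrank (H.asLieSubmodule K L).toSubmodule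
  have := lieIndex_le (F t)
  omega

end Index

/-- the Raïs-type criterion, Lemma 4.3 of the paper.  Let `𝔤` be a
finite-dimensional real Lie algebra and `𝔥 ⊆ 𝔤` a Lie subalgebra.  The following are
equivalent: (i) there exists `a ∈ (𝔤/𝔥)*` with
`ind 𝔥^a + codim_{(𝔤/𝔥)*} O_a = ind 𝔤`; (ii) `ind (𝔥 ⋉ (𝔤/𝔥)) = ind 𝔤`. -/
theorem exists_coad_index_eq_iff_index_semidirect_eq
    (𝔤 : Type*) [LieRing 𝔤] [LieAlgebra ℝ 𝔤] [FiniteDimensional ℝ 𝔤]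
    (H : LieSubalgebra ℝ 𝔤) :
    (∃ a : Module.Dual ℝ (LieSubalgebra.quotientModule ℝ 𝔤 H),
        lieIndex ℝ (lieCoadIsotropy ℝ 𝔤 H a) +
          (finrank ℝ (Module.Dual ℝ (LieSubalgebra.quotientModule ℝ 𝔤 H)) -
            finrank ℝ (LinearMap.range (lieCoadMap ℝ 𝔤 H a))) =
          lieIndex ℝ 𝔤) ↔
      lieIndex ℝ (LieSemidirect H (LieSubalgebra.quotientModule ℝ 𝔤 H)) = lieIndex ℝ 𝔤 := by
  constructor
  · rintro ⟨a, ha⟩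
    exact le_antisymm (ha ▸ lieIndex_semidirect_le a) lieIndex_le_lieIndex_semidirect
  · intro h
    obtain ⟨a, ha⟩ := exists_lieIndex_add_codim_eq_lieIndex_semidirect (H := H)
    exact ⟨a, ha.trans h⟩
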